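/- arXiv:1608.08791 — 9 statements merged into one kernel-verified Lean document; each statement's English description precedes it below -/
import Mathlib

section
/- Any set of d permutations π₁,…,π_d of {1,…,n} admits a parallel simultaneous embedding in ℝ^d: there exist n non-vertical hyperplanes H₁,…,Hₙ (each the graph of an affine function h_i : ℝ^{d−1} → ℝ) and d points ℓ₁,…,ℓ_d ∈ ℝ^{d−1} (representing vertical lines) such that for each j, the values h_{π_j(1)}(ℓ_j) < h_{π_j(2)}(ℓ_j) < ⋯ < h_{π_j(n)}(ℓ_j). -/
/-- Any `d` permutations of `Fin n` admit a parallel simultaneous embedding in `ℝ^d`: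
there are `n` non-vertical hyperplanes (affine maps `ℝ^(d-1) → ℝ`) and `d` vertical
lines (points of `ℝ^(d-1)`) realizing all `d` orders. -/
theorem d_perms_parallel_simultaneous_embedding (d n : ℕ) (π : Fin d → Equiv.Perm (Fin n)) :
    ∃ (h : Fin n → ((Fin (d - 1) → ℝ) →ᵃ[ℝ] ℝ)) (ℓ : Fin d → (Fin (d - 1) → ℝ)),
      ∀ j : Fin d, StrictMono fun i : Fin n => h (π j i) (ℓ j) := by
  rcases Nat.eq_zero_or_pos d with hd | hd
  · subst hd
    exact ⟨fun _ => AffineMap.const ℝ _ 0, fun j => j.elim0, fun j => j.elim0⟩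
  set v : Fin d → Fin n → ℝ := fun j i => (((π j).symm i : ℕ) : ℝ) with hv
  have hdd : d - 1 < d := by omega
  set jd : Fin d := ⟨d - 1, hdd⟩ with hjd
  set c : Fin n → ℝ := v jd with hc
  set a : Fin n → Fin (d - 1) → ℝ := fun i k => v ⟨k, by omega⟩ i - c i with ha
  refine ⟨fun i => AffineMap.const ℝ (Fin (d-1) → ℝ) (c i) +
      (∑ k : Fin (d-1), a i k • (LinearMap.proj k : (Fin (d-1) → ℝ) →ₗ[ℝ] ℝ)).toAffineMap,
    fun j k => if (k : ℕ) = (j : ℕ) then 1 else 0, fun j => ?_⟩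
  have key : ∀ i : Fin n,
      (AffineMap.const ℝ (Fin (d-1) → ℝ) (c i) +
      (∑ k : Fin (d-1), a i k • (LinearMap.proj k : (Fin (d-1) → ℝ) →ₗ[ℝ] ℝ)).toAffineMap)
      (fun k => if (k : ℕ) = (j : ℕ) then 1 else 0) = v j i := by
    intro i
    simp only [AffineMap.coe_add, Pi.add_apply, AffineMap.const_apply,
      LinearMap.coe_toAffineMap, LinearMap.sum_apply, LinearMap.smul_apply,
      LinearMap.proj_apply, smul_eq_mul]
    rcases Nat.lt_or_ge (j : ℕ) (d - 1) with hj | hj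
    · have : ∀ k : Fin (d-1),
          a i k * (if (k : ℕ) = (j : ℕ) then 1 else 0) =
            if k = ⟨j, hj⟩ then a i ⟨j, hj⟩ else 0 := by
        intro k
        by_cases hk : k = ⟨(j : ℕ), hj⟩
        · subst hk; simp
        · have : (k : ℕ) ≠ (j : ℕ) := fun h => hk (Fin.ext h)
          simp [hk, this]
      rw [Finset.sum_congr rfl fun k _ => this k, Finset.sum_ite_eq' Finset.univ]
      simp only [Finset.mem_univ, if_true, ha]
      ring_nf
    · have hje : j = jd := by
        have := j.isLt; apply Fin.ext; simp [hjd]; omega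
      have : ∀ k : Fin (d-1), a i k * (if (k : ℕ) = (j : ℕ) then 1 else 0) = 0 := by
        intro k
        have : (k : ℕ) ≠ (j : ℕ) := by have := k.isLt; omega
        simp [this]
      rw [Finset.sum_congr rfl fun k _ => this k]
      simp [hje, hc]
  intro i i' hlt
  simp only [key]
  simp only [hv, Equiv.symm_apply_apply]
  exact_mod_cast hlt
end

section
/- If a set of k permutations of {1,…,n} admits a parallel simultaneous embedding in ℝ^d, then it admits a monotone simultaneous embedding in ℝ^d. Explicitly, if h₁,…,hₙ : ℝ^{d−1} → ℝ are affine functions with h_i(x) = Σ α_{i,m} x_m − α_{i,0}, and ℓ₁,…,ℓ_k ∈ ℝ^{d−1} are points such that h_{π_j(i)}(ℓ_j) is strictly increasing in i for each j, then the dual points p_i = (α_{i,1},…,α_{i,d−1}, α_{i,0}) ∈ ℝ^d, together with suitable vectors v_j, form a monotone simultaneous embedding of π₁,…,π_k. -/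
/-- Duality: a parallel simultaneous embedding in `ℝ^(d+1)` (hyperplanes
`x_{d+1} = ∑ α_{i,m} x_m - α_{i,0}` over `ℝ^d`, vertical lines `ℓ j`) yields a monotone
simultaneous embedding in `ℝ^(d+1)` with dual points `p i = (α_{i,1},…,α_{i,d}, α_{i,0})`. -/
theorem parallel_to_monotone_duality (d k n : ℕ) (π : Fin k → Equiv.Perm (Fin n))
    (α : Fin n → Fin d → ℝ) (α₀ : Fin n → ℝ) (ℓ : Fin k → (Fin d → ℝ))
    (hpar : ∀ j : Fin k,
      StrictMono fun i : Fin n => (∑ m, α (π j i) m * ℓ j m) - α₀ (π j i)) :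
    ∃ v : Fin k → (Fin (d + 1) → ℝ), (∀ j, v j ≠ 0) ∧
      ∀ (j : Fin k) (i : Fin n) (hi : (i : ℕ) + 1 < n),
        0 < ∑ m, ((Fin.snoc (α (π j ⟨(i : ℕ) + 1, hi⟩)) (α₀ (π j ⟨(i : ℕ) + 1, hi⟩)) : Fin (d+1) → ℝ) m
              - (Fin.snoc (α (π j i)) (α₀ (π j i)) : Fin (d+1) → ℝ) m) * v j m := by
  refine ⟨fun j => Fin.snoc (ℓ j) (-1), fun j h => by
    have := congrFun h (Fin.last d)
    simp [Fin.snoc] at this, ?_⟩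
  intro j i hi
  have key := hpar j (show i < ⟨(i : ℕ) + 1, hi⟩ from by
    simp [Fin.lt_def])
  simp only at key
  have : (∑ m : Fin (d+1),
      ((Fin.snoc (α (π j ⟨(i : ℕ) + 1, hi⟩)) (α₀ (π j ⟨(i : ℕ) + 1, hi⟩)) : Fin (d+1) → ℝ) m
        - (Fin.snoc (α (π j i)) (α₀ (π j i)) : Fin (d+1) → ℝ) m) * (Fin.snoc (ℓ j) (-1) : Fin (d+1) → ℝ) m)
      = ((∑ m, α (π j ⟨(i : ℕ) + 1, hi⟩) m * ℓ j m) - α₀ (π j ⟨(i : ℕ) + 1, hi⟩))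
        - ((∑ m, α (π j i) m * ℓ j m) - α₀ (π j i)) := by
    rw [Fin.sum_univ_castSucc]
    simp [sub_mul, Finset.sum_sub_distrib]
    ring
  rw [this]
  linarith
end

section
/- If permutations π₁,…,π_k of {1,…,n} admit a monotone simultaneous embedding in ℝ^d, then there exist permutations π′₁,…,π′_k, each equal to π_j or its reverse, that admit a parallel simultaneous embedding in ℝ^d. -/
/-!
Projective duality. Pick a linear functional `f` vanishing at none of the `v j` (finitely many
proper hyperplanes do not cover the space) and parametrize the affine hyperplane `f = 1` by an
affine chart `φ : ℝ^d → ℝ^(d+1)`. The point `p i` becomes the affine function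
`h i = ⟪p i, φ ·⟫`, and the direction `v j` becomes the chart coordinate `ℓ j` of `v j / f (v j)`,
so that `h i (ℓ j) = ⟪p i, v j⟫ / f (v j)`. Along `π j` the numerator increases, hence
`i ↦ h (π j i) (ℓ j)` is increasing or decreasing according to the sign of `f (v j)`, and in the
second case reversing `π j` makes it increasing.
-/

open Module

section AffineChart

variable {K E : Type*} [Field K] [AddCommGroup E] [Module K E] [FiniteDimensional K E]

theorem Module.Dual.exists_affineMap_preimage_one_subset_range (f : Dual K E) {d : ℕ}
    (hd : finrank K E = d + 1) : ∃ φ : (Fin d → K) →ᵃ[K] E, f ⁻¹' {1} ⊆ Set.range φ := by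
  by_cases hf : f = 0
  · refine ⟨0, fun u hu => ?_⟩
    simp [hf] at hu
  obtain ⟨u₀, hu₀⟩ := LinearMap.surjective hf 1
  have hker : finrank K (Fin d → K) = finrank K (LinearMap.ker f) := by
    rw [finrank_fin_fun]
    have := f.finrank_ker_add_one_of_ne_zero hf
    omega
  let e := LinearEquiv.ofFinrankEq _ _ hker
  refine ⟨((LinearMap.ker f).subtype ∘ₗ e.toLinearMap).toAffineMap + AffineMap.const K _ u₀,
    fun u hu => ⟨e.symm ⟨u - u₀, by simp_all⟩, by simp⟩⟩

theorem Module.Dual.exists_affineMap_apply_eq_div {ι κ : Type*} (g : ι → Dual K E)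
    (f : Dual K E) (v : κ → E) (hv : ∀ j, f (v j) ≠ 0) {d : ℕ} (hd : finrank K E = d + 1) :
    ∃ (h : ι → (Fin d → K) →ᵃ[K] K) (ℓ : κ → Fin d → K),
      ∀ i j, h i (ℓ j) = g i (v j) / f (v j) := by
  obtain ⟨φ, hφ⟩ := f.exists_affineMap_preimage_one_subset_range hd
  have hu : ∀ j, (f (v j))⁻¹ • v j ∈ f ⁻¹' {1} := fun j => by simp [hv j]
  choose ℓ hℓ using fun j => hφ (hu j)
  refine ⟨fun i => (g i).toAffineMap.comp φ, ℓ, fun i j => ?_⟩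
  simp [hℓ, div_eq_inv_mul]

end AffineChart

theorem Fin.strictMono_of_lt_add_one {α : Type*} [Preorder α] {n : ℕ} {f : Fin n → α}
    (hf : ∀ (i : Fin n) (hi : (i : ℕ) + 1 < n), f i < f ⟨i + 1, hi⟩) : StrictMono f := by
  cases n with
  | zero => exact fun a => a.elim0
  | succ n => exact Fin.strictMono_iff_lt_succ.2 fun i => hf i.castSucc (by simp)

theorem exists_eq_or_eq_revPerm_trans_strictMono_div {n : ℕ} {F : Fin n → ℝ}
    (π : Equiv.Perm (Fin n)) (hF : StrictMono (F ∘ π)) {c : ℝ} (hc : c ≠ 0) :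
    ∃ σ : Equiv.Perm (Fin n), (σ = π ∨ σ = Fin.revPerm.trans π) ∧
      StrictMono fun i => F (σ i) / c := by
  rcases hc.lt_or_gt with hneg | hpos
  · exact ⟨Fin.revPerm.trans π, Or.inr rfl,
      fun a b hab => div_lt_div_of_neg_of_lt hneg (hF (Fin.rev_lt_rev.2 hab))⟩
  · exact ⟨π, Or.inl rfl, fun a b hab => div_lt_div_of_pos_right (hF hab) hpos⟩

/-- If `k` permutations admit a monotone simultaneous embedding in `ℝ^(d+1)`, then some
permutations `π'_j`, each equal to `π_j` or its reverse, admit a parallel simultaneous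
embedding in `ℝ^(d+1)` (hyperplanes are affine maps `ℝ^d → ℝ`). -/
theorem monotone_to_parallel_duality (d k n : ℕ) (π : Fin k → Equiv.Perm (Fin n))
    (p : Fin n → (Fin (d + 1) → ℝ)) (v : Fin k → (Fin (d + 1) → ℝ))
    (hv : ∀ j, v j ≠ 0)
    (hmono : ∀ (j : Fin k) (i : Fin n) (hi : (i : ℕ) + 1 < n),
      0 < ∑ m, (p (π j ⟨(i : ℕ) + 1, hi⟩) m - p (π j i) m) * v j m) :
    ∃ π' : Fin k → Equiv.Perm (Fin n),
      (∀ j, π' j = π j ∨ π' j = (Fin.revPerm).trans (π j)) ∧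
      ∃ (h : Fin n → ((Fin d → ℝ) →ᵃ[ℝ] ℝ)) (ℓ : Fin k → (Fin d → ℝ)),
        ∀ j : Fin k, StrictMono fun i : Fin n => h (π' j i) (ℓ j) := by
  obtain ⟨f, hf⟩ := Module.exists_dual_forall_apply_ne_zero (K := ℝ) v hv
  obtain ⟨h, ℓ, hhℓ⟩ := f.exists_affineMap_apply_eq_div (d := d)
    (fun i => dotProductEquiv ℝ _ (p i)) v hf (by simp)
  have hproj : ∀ j, StrictMono fun i => p (π j i) ⬝ᵥ v j := fun j =>
    Fin.strictMono_of_lt_add_one fun i hi => by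
      have : 0 < (p (π j ⟨i + 1, hi⟩) - p (π j i)) ⬝ᵥ v j := hmono j i hi
      rwa [sub_dotProduct, sub_pos] at this
  choose π' hπ' hπ'mono using fun j => exists_eq_or_eq_revPerm_trans_strictMono_div
    (F := fun a => p a ⬝ᵥ v j) (π j) (hproj j) (hf j)
  refine ⟨π', hπ', h, ℓ, fun j => ?_⟩
  simpa only [hhℓ, dotProductEquiv_apply_apply] using hπ'mono j
end

section
/- The three permutations π₁ = (1,0,2), π₂ = (2,1,0), π₃ = (0,2,1) of {0,1,2} do not admit a parallel simultaneous embedding in the plane: there do not exist affine functions h₀, h₁, h₂ : ℝ → ℝ and real numbers x₁, x₂, x₃ such that h₁(x₁) < h₀(x₁) < h₂(x₁), h₂(x₂) < h₁(x₂) < h₀(x₂), and h₀(x₃) < h₂(x₃) < h₁(x₃). -/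
lemma affine_eq (h : ℝ →ᵃ[ℝ] ℝ) (x : ℝ) : h x = h.linear 1 * x + h 0 := by
  have h1 : h x = h.linear x + h 0 := by
    have := h.map_vadd (0:ℝ) x
    simpa [vadd_eq_add] using this
  have h2 : h.linear x = h.linear 1 * x := by
    rw [show x = x • (1:ℝ) by simp, map_smul]; simp [mul_comm]
  rw [h1, h2]

/-- The permutations `(1,0,2)`, `(2,1,0)`, `(0,2,1)` of `{0,1,2}` admit no parallel
simultaneous embedding in the plane. -/
theorem no_parallel_embedding_2d :
    ¬ ∃ (h₀ h₁ h₂ : ℝ →ᵃ[ℝ] ℝ) (x₁ x₂ x₃ : ℝ),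
      (h₁ x₁ < h₀ x₁ ∧ h₀ x₁ < h₂ x₁) ∧
      (h₂ x₂ < h₁ x₂ ∧ h₁ x₂ < h₀ x₂) ∧
      (h₀ x₃ < h₂ x₃ ∧ h₂ x₃ < h₁ x₃) := by
  rintro ⟨h₀, h₁, h₂, x₁, x₂, x₃, ⟨p1, p2⟩, ⟨q1, q2⟩, ⟨r1, r2⟩⟩
  obtain ⟨a0, b0, e0⟩ : ∃ a b, ∀ x, h₀ x = a * x + b := ⟨_, _, affine_eq h₀⟩
  obtain ⟨a1, b1, e1⟩ : ∃ a b, ∀ x, h₁ x = a * x + b := ⟨_, _, affine_eq h₁⟩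
  obtain ⟨a2, b2, e2⟩ : ∃ a b, ∀ x, h₂ x = a * x + b := ⟨_, _, affine_eq h₂⟩
  simp only [e0, e1, e2] at p1 p2 q1 q2 r1 r2
  -- F = (a0-a1)x+(b0-b1): >0 at x1,x2, <0 at x3
  -- G = (a2-a0)x+(b2-b0): >0 at x1,x3, <0 at x2
  -- H = (a1-a2)x+(b1-b2): <0 at x1, >0 at x2,x3
  rcases le_total x₁ x₂ with h12 | h12 <;> rcases le_total x₂ x₃ with h23 | h23 <;>
    rcases le_total x₁ x₃ with h13 | h13 <;>
    nlinarith [mul_pos (sub_pos.2 p1) (sub_pos.2 q2), mul_pos (sub_pos.2 p2) (sub_pos.2 r1),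
      mul_pos (sub_pos.2 q1) (sub_pos.2 r2),
      mul_nonneg (sub_nonneg.2 h12) (sub_pos.2 p1).le,
      mul_nonneg (sub_nonneg.2 h12) (sub_pos.2 r2).le]
end

section
/- The three permutations π₁ = (f,b,d,e,a,c), π₂ = (d,f,c,b,e,a), π₃ = (f,a,d,c,e,b) of a 6-element set {a,b,c,d,e,f} do not admit a monotone simultaneous embedding in the plane: there is no map p from {a,…,f} to ℝ² together with nonzero vectors v₁, v₂, v₃ ∈ ℝ² such that for each j the inner products ⟨p(π_j(i+1)) − p(π_j(i)), v_j⟩ are positive for all consecutive i. -/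
private lemma dep2 (a b c : Fin 2 → ℝ) :
    ∃ x y z : ℝ, ¬(x = 0 ∧ y = 0 ∧ z = 0) ∧ ∀ m, x * a m + y * b m + z * c m = 0 := by
  by_cases h1 : a 0 * b 1 - a 1 * b 0 = 0
  · by_cases h2 : a 0 = 0 ∧ b 0 = 0
    · by_cases h3 : a 1 = 0 ∧ b 1 = 0
      · refine ⟨1, 0, 0, by norm_num, ?_⟩
        intro m; fin_cases m <;> simp [h2.1, h3.1]
      · refine ⟨b 1, -(a 1), 0, ?_, ?_⟩
        · rintro ⟨hb, ha, -⟩; exact h3 ⟨by linarith [neg_eq_zero.mp ha], hb⟩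
        · intro m; fin_cases m <;> simp only [Fin.zero_eta, Fin.mk_one] <;> linarith [h1]
    · refine ⟨b 0, -(a 0), 0, ?_, ?_⟩
      · rintro ⟨hb, ha, -⟩; exact h2 ⟨by linarith [neg_eq_zero.mp ha], hb⟩
      · intro m; fin_cases m <;> simp only [Fin.zero_eta, Fin.mk_one] <;> linarith [h1]
  · refine ⟨b 0 * c 1 - b 1 * c 0, c 0 * a 1 - c 1 * a 0, a 0 * b 1 - a 1 * b 0,
      fun h => h1 h.2.2, ?_⟩
    intro m; fin_cases m <;> simp only [Fin.zero_eta, Fin.mk_one] <;> ring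

/-- With vertices `a,b,c,d,e,f` encoded as `0,…,5`, the three paths
`π₁ = (f,b,d,e,a,c)`, `π₂ = (d,f,c,b,e,a)`, `π₃ = (f,a,d,c,e,b)` admit no monotone
simultaneous embedding in the plane. -/
theorem no_monotone_embedding_6_vertices_2d :
    ¬ ∃ (p : Fin 6 → (Fin 2 → ℝ)) (v : Fin 3 → (Fin 2 → ℝ)),
      (∀ j, v j ≠ 0) ∧
      ∀ (j : Fin 3) (i : Fin 5),
        0 < ∑ m, (p ((![![5,1,3,4,0,2], ![3,5,2,1,4,0], ![5,0,3,2,4,1]] :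
                    Fin 3 → Fin 6 → Fin 6) j i.succ) m
              - p ((![![5,1,3,4,0,2], ![3,5,2,1,4,0], ![5,0,3,2,4,1]] :
                    Fin 3 → Fin 6 → Fin 6) j i.castSucc) m) * v j m := by
  rintro ⟨p, v, -, hpos⟩
  set g : Fin 3 → Fin 6 → ℝ := fun j u => ∑ m, p u m * v j m with hg
  have k0_0 : g 0 5 < g 0 1 := by
    have h := hpos 0 0
    simp only [sub_mul, Finset.sum_sub_distrib, sub_pos] at h
    exact h
  have k0_1 : g 0 1 < g 0 3 := by
    have h := hpos 0 1
    simp only [sub_mul, Finset.sum_sub_distrib, sub_pos] at h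
    exact h
  have k0_2 : g 0 3 < g 0 4 := by
    have h := hpos 0 2
    simp only [sub_mul, Finset.sum_sub_distrib, sub_pos] at h
    exact h
  have k0_3 : g 0 4 < g 0 0 := by
    have h := hpos 0 3
    simp only [sub_mul, Finset.sum_sub_distrib, sub_pos] at h
    exact h
  have k0_4 : g 0 0 < g 0 2 := by
    have h := hpos 0 4
    simp only [sub_mul, Finset.sum_sub_distrib, sub_pos] at h
    exact h
  have k1_0 : g 1 3 < g 1 5 := by
    have h := hpos 1 0
    simp only [sub_mul, Finset.sum_sub_distrib, sub_pos] at h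
    exact h
  have k1_1 : g 1 5 < g 1 2 := by
    have h := hpos 1 1
    simp only [sub_mul, Finset.sum_sub_distrib, sub_pos] at h
    exact h
  have k1_2 : g 1 2 < g 1 1 := by
    have h := hpos 1 2
    simp only [sub_mul, Finset.sum_sub_distrib, sub_pos] at h
    exact h
  have k1_3 : g 1 1 < g 1 4 := by
    have h := hpos 1 3
    simp only [sub_mul, Finset.sum_sub_distrib, sub_pos] at h
    exact h
  have k1_4 : g 1 4 < g 1 0 := by
    have h := hpos 1 4
    simp only [sub_mul, Finset.sum_sub_distrib, sub_pos] at h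
    exact h
  have k2_0 : g 2 5 < g 2 0 := by
    have h := hpos 2 0
    simp only [sub_mul, Finset.sum_sub_distrib, sub_pos] at h
    exact h
  have k2_1 : g 2 0 < g 2 3 := by
    have h := hpos 2 1
    simp only [sub_mul, Finset.sum_sub_distrib, sub_pos] at h
    exact h
  have k2_2 : g 2 3 < g 2 2 := by
    have h := hpos 2 2
    simp only [sub_mul, Finset.sum_sub_distrib, sub_pos] at h
    exact h
  have k2_3 : g 2 2 < g 2 4 := by
    have h := hpos 2 3
    simp only [sub_mul, Finset.sum_sub_distrib, sub_pos] at h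
    exact h
  have k2_4 : g 2 4 < g 2 1 := by
    have h := hpos 2 4
    simp only [sub_mul, Finset.sum_sub_distrib, sub_pos] at h
    exact h
  obtain ⟨x, y, z, hnt, hrel⟩ := dep2 (v 0) (v 1) (v 2)
  have hsum : ∀ u : Fin 6, x * g 0 u + y * g 1 u + z * g 2 u = 0 := by
    intro u
    simp only [hg, Fin.sum_univ_two]
    linear_combination p u 0 * hrel 0 + p u 1 * hrel 1
  rcases lt_trichotomy x 0 with hx | hx | hx <;>
    rcases lt_trichotomy y 0 with hy | hy | hy <;>
      rcases lt_trichotomy z 0 with hz | hz | hz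
  · linarith [hsum 0, hsum 5,
      mul_pos_of_neg_of_neg hx (show (g 0 5 - g 0 0) < 0 by linarith),
      mul_pos_of_neg_of_neg hy (show (g 1 5 - g 1 0) < 0 by linarith),
      mul_pos_of_neg_of_neg hz (show (g 2 5 - g 2 0) < 0 by linarith)]
  · linarith [hsum 0, hsum 1,
      mul_pos_of_neg_of_neg hx (show (g 0 1 - g 0 0) < 0 by linarith),
      mul_pos_of_neg_of_neg hy (show (g 1 1 - g 1 0) < 0 by linarith),
      (show z * (g 2 1 - g 2 0) = 0 by rw [hz]; ring)]
  · linarith [hsum 0, hsum 1,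
      mul_pos_of_neg_of_neg hx (show (g 0 1 - g 0 0) < 0 by linarith),
      mul_pos_of_neg_of_neg hy (show (g 1 1 - g 1 0) < 0 by linarith),
      mul_pos hz (show (0:ℝ) < (g 2 1 - g 2 0) by linarith)]
  · linarith [hsum 3, hsum 5,
      mul_pos_of_neg_of_neg hx (show (g 0 5 - g 0 3) < 0 by linarith),
      (show y * (g 1 5 - g 1 3) = 0 by rw [hy]; ring),
      mul_pos_of_neg_of_neg hz (show (g 2 5 - g 2 3) < 0 by linarith)]
  · linarith [hsum 2, hsum 1,
      mul_pos_of_neg_of_neg hx (show (g 0 1 - g 0 2) < 0 by linarith),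
      (show y * (g 1 1 - g 1 2) = 0 by rw [hy]; ring),
      (show z * (g 2 1 - g 2 2) = 0 by rw [hz]; ring)]
  · linarith [hsum 2, hsum 1,
      mul_pos_of_neg_of_neg hx (show (g 0 1 - g 0 2) < 0 by linarith),
      (show y * (g 1 1 - g 1 2) = 0 by rw [hy]; ring),
      mul_pos hz (show (0:ℝ) < (g 2 1 - g 2 2) by linarith)]
  · linarith [hsum 3, hsum 5,
      mul_pos_of_neg_of_neg hx (show (g 0 5 - g 0 3) < 0 by linarith),
      mul_pos hy (show (0:ℝ) < (g 1 5 - g 1 3) by linarith),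
      mul_pos_of_neg_of_neg hz (show (g 2 5 - g 2 3) < 0 by linarith)]
  · linarith [hsum 2, hsum 1,
      mul_pos_of_neg_of_neg hx (show (g 0 1 - g 0 2) < 0 by linarith),
      mul_pos hy (show (0:ℝ) < (g 1 1 - g 1 2) by linarith),
      (show z * (g 2 1 - g 2 2) = 0 by rw [hz]; ring)]
  · linarith [hsum 2, hsum 1,
      mul_pos_of_neg_of_neg hx (show (g 0 1 - g 0 2) < 0 by linarith),
      mul_pos hy (show (0:ℝ) < (g 1 1 - g 1 2) by linarith),
      mul_pos hz (show (0:ℝ) < (g 2 1 - g 2 2) by linarith)]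
  · linarith [hsum 1, hsum 2,
      (show x * (g 0 2 - g 0 1) = 0 by rw [hx]; ring),
      mul_pos_of_neg_of_neg hy (show (g 1 2 - g 1 1) < 0 by linarith),
      mul_pos_of_neg_of_neg hz (show (g 2 2 - g 2 1) < 0 by linarith)]
  · linarith [hsum 5, hsum 3,
      (show x * (g 0 3 - g 0 5) = 0 by rw [hx]; ring),
      mul_pos_of_neg_of_neg hy (show (g 1 3 - g 1 5) < 0 by linarith),
      (show z * (g 2 3 - g 2 5) = 0 by rw [hz]; ring)]
  · linarith [hsum 5, hsum 3,
      (show x * (g 0 3 - g 0 5) = 0 by rw [hx]; ring),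
      mul_pos_of_neg_of_neg hy (show (g 1 3 - g 1 5) < 0 by linarith),
      mul_pos hz (show (0:ℝ) < (g 2 3 - g 2 5) by linarith)]
  · linarith [hsum 1, hsum 0,
      (show x * (g 0 0 - g 0 1) = 0 by rw [hx]; ring),
      (show y * (g 1 0 - g 1 1) = 0 by rw [hy]; ring),
      mul_pos_of_neg_of_neg hz (show (g 2 0 - g 2 1) < 0 by linarith)]
  · exact hnt ⟨hx, hy, hz⟩
  · linarith [hsum 5, hsum 0,
      (show x * (g 0 0 - g 0 5) = 0 by rw [hx]; ring),
      (show y * (g 1 0 - g 1 5) = 0 by rw [hy]; ring),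
      mul_pos hz (show (0:ℝ) < (g 2 0 - g 2 5) by linarith)]
  · linarith [hsum 1, hsum 0,
      (show x * (g 0 0 - g 0 1) = 0 by rw [hx]; ring),
      mul_pos hy (show (0:ℝ) < (g 1 0 - g 1 1) by linarith),
      mul_pos_of_neg_of_neg hz (show (g 2 0 - g 2 1) < 0 by linarith)]
  · linarith [hsum 5, hsum 0,
      (show x * (g 0 0 - g 0 5) = 0 by rw [hx]; ring),
      mul_pos hy (show (0:ℝ) < (g 1 0 - g 1 5) by linarith),
      (show z * (g 2 0 - g 2 5) = 0 by rw [hz]; ring)]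
  · linarith [hsum 5, hsum 0,
      (show x * (g 0 0 - g 0 5) = 0 by rw [hx]; ring),
      mul_pos hy (show (0:ℝ) < (g 1 0 - g 1 5) by linarith),
      mul_pos hz (show (0:ℝ) < (g 2 0 - g 2 5) by linarith)]
  · linarith [hsum 1, hsum 2,
      mul_pos hx (show (0:ℝ) < (g 0 2 - g 0 1) by linarith),
      mul_pos_of_neg_of_neg hy (show (g 1 2 - g 1 1) < 0 by linarith),
      mul_pos_of_neg_of_neg hz (show (g 2 2 - g 2 1) < 0 by linarith)]
  · linarith [hsum 5, hsum 3,
      mul_pos hx (show (0:ℝ) < (g 0 3 - g 0 5) by linarith),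
      mul_pos_of_neg_of_neg hy (show (g 1 3 - g 1 5) < 0 by linarith),
      (show z * (g 2 3 - g 2 5) = 0 by rw [hz]; ring)]
  · linarith [hsum 5, hsum 3,
      mul_pos hx (show (0:ℝ) < (g 0 3 - g 0 5) by linarith),
      mul_pos_of_neg_of_neg hy (show (g 1 3 - g 1 5) < 0 by linarith),
      mul_pos hz (show (0:ℝ) < (g 2 3 - g 2 5) by linarith)]
  · linarith [hsum 1, hsum 0,
      mul_pos hx (show (0:ℝ) < (g 0 0 - g 0 1) by linarith),
      (show y * (g 1 0 - g 1 1) = 0 by rw [hy]; ring),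
      mul_pos_of_neg_of_neg hz (show (g 2 0 - g 2 1) < 0 by linarith)]
  · linarith [hsum 5, hsum 0,
      mul_pos hx (show (0:ℝ) < (g 0 0 - g 0 5) by linarith),
      (show y * (g 1 0 - g 1 5) = 0 by rw [hy]; ring),
      (show z * (g 2 0 - g 2 5) = 0 by rw [hz]; ring)]
  · linarith [hsum 5, hsum 0,
      mul_pos hx (show (0:ℝ) < (g 0 0 - g 0 5) by linarith),
      (show y * (g 1 0 - g 1 5) = 0 by rw [hy]; ring),
      mul_pos hz (show (0:ℝ) < (g 2 0 - g 2 5) by linarith)]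
  · linarith [hsum 1, hsum 0,
      mul_pos hx (show (0:ℝ) < (g 0 0 - g 0 1) by linarith),
      mul_pos hy (show (0:ℝ) < (g 1 0 - g 1 1) by linarith),
      mul_pos_of_neg_of_neg hz (show (g 2 0 - g 2 1) < 0 by linarith)]
  · linarith [hsum 5, hsum 0,
      mul_pos hx (show (0:ℝ) < (g 0 0 - g 0 5) by linarith),
      mul_pos hy (show (0:ℝ) < (g 1 0 - g 1 5) by linarith),
      (show z * (g 2 0 - g 2 5) = 0 by rw [hz]; ring)]
  · linarith [hsum 5, hsum 0,
      mul_pos hx (show (0:ℝ) < (g 0 0 - g 0 5) by linarith),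
      mul_pos hy (show (0:ℝ) < (g 1 0 - g 1 5) by linarith),
      mul_pos hz (show (0:ℝ) < (g 2 0 - g 2 5) by linarith)]
end

section
/- (3D wedge lemma) Let h₁, h₂, h₃ : ℝ² → ℝ be affine functions and ℓ₁, ℓ₂, ℓ₃ ∈ ℝ² be three affinely independent points such that h₁(ℓ₁) < h₂(ℓ₁) < h₃(ℓ₁), h₂(ℓ₂) < h₃(ℓ₂) < h₁(ℓ₂), and h₃(ℓ₃) < h₁(ℓ₃) < h₂(ℓ₃). Then every point ℓ ∈ ℝ² with h₃(ℓ) < h₂(ℓ) < h₁(ℓ) lies in the union of the closed triangle ℓ₁ℓ₂ℓ₃ and the closed half-plane bounded by the line through ℓ₂ and ℓ₃ not containing ℓ₁. -/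
/-- 3D wedge lemma: under the stated orderings at three affinely independent vertical
lines `ℓ₁, ℓ₂, ℓ₃`, every vertical line `ℓ` with `h₃(ℓ) < h₂(ℓ) < h₁(ℓ)` lies in the union
of the closed triangle `ℓ₁ℓ₂ℓ₃` and the closed half-plane bounded by the line `ℓ₂ℓ₃` not
containing `ℓ₁` (described as `{x | g x ≤ 0}` for any affine `g` vanishing on `ℓ₂, ℓ₃` and
positive at `ℓ₁`). -/
theorem wedge_lemma_3d (h₁ h₂ h₃ : (Fin 2 → ℝ) →ᵃ[ℝ] ℝ) (ℓ₁ ℓ₂ ℓ₃ : Fin 2 → ℝ)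
    (hind : AffineIndependent ℝ ![ℓ₁, ℓ₂, ℓ₃])
    (o1 : h₁ ℓ₁ < h₂ ℓ₁ ∧ h₂ ℓ₁ < h₃ ℓ₁)
    (o2 : h₂ ℓ₂ < h₃ ℓ₂ ∧ h₃ ℓ₂ < h₁ ℓ₂)
    (o3 : h₃ ℓ₃ < h₁ ℓ₃ ∧ h₁ ℓ₃ < h₂ ℓ₃) :
    ∀ ℓ : Fin 2 → ℝ, h₃ ℓ < h₂ ℓ → h₂ ℓ < h₁ ℓ →
      ∀ g : (Fin 2 → ℝ) →ᵃ[ℝ] ℝ, g ℓ₂ = 0 → g ℓ₃ = 0 → 0 < g ℓ₁ →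
        ℓ ∈ convexHull ℝ {ℓ₁, ℓ₂, ℓ₃} ∨ g ℓ ≤ 0 := by
  intro ℓ hl32 hl21 g hg2 hg3 hg1
  have htot : affineSpan ℝ (Set.range ![ℓ₁, ℓ₂, ℓ₃]) = ⊤ := by
    rw [hind.affineSpan_eq_top_iff_card_eq_finrank_add_one]
    simp
  let B : AffineBasis (Fin 3) ℝ (Fin 2 → ℝ) := ⟨![ℓ₁, ℓ₂, ℓ₃], hind, htot⟩
  set a := B.coord 0 ℓ with ha
  set b := B.coord 1 ℓ with hb
  set c := B.coord 2 ℓ with hc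
  have hsum : a + b + c = 1 := by
    have := B.sum_coord_apply_eq_one ℓ
    rw [Fin.sum_univ_three] at this
    linarith
  have hsum' : (Finset.univ : Finset (Fin 3)).sum (fun i => B.coord i ℓ) = 1 :=
    B.sum_coord_apply_eq_one ℓ
  have hrep : ∀ h : (Fin 2 → ℝ) →ᵃ[ℝ] ℝ, h ℓ = a * h ℓ₁ + b * h ℓ₂ + c * h ℓ₃ := by
    intro h
    conv_lhs => rw [← B.affineCombination_coord_eq_self ℓ]
    rw [Finset.map_affineCombination _ _ _ hsum',
      Finset.affineCombination_eq_linear_combination _ _ _ hsum', Fin.sum_univ_three]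
    rfl
  have e1 := hrep h₁
  have e2 := hrep h₂
  have e3 := hrep h₃
  have eg := hrep g
  rw [hg2, hg3] at eg
  rcases le_or_gt a 0 with hA | hA
  · right
    rw [eg]
    nlinarith
  · left
    have hBnn : 0 ≤ b ∧ 0 ≤ c := by
      have key : ¬(b < 0 ∧ c < 0) := by
        rintro ⟨hb', hc'⟩
        nlinarith [mul_pos hA (sub_pos.2 (o1.2.trans' o1.1 : h₁ ℓ₁ < h₃ ℓ₁)),
          mul_pos (neg_pos.2 hb') (sub_pos.2 (o2.2 : h₃ ℓ₂ < h₁ ℓ₂)),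
          mul_pos (neg_pos.2 hc') (sub_pos.2 (o3.1 : h₃ ℓ₃ < h₁ ℓ₃))]
      rcases le_or_gt 0 b with hb' | hb'
      · refine ⟨hb', ?_⟩
        -- f₂ = h₂ - h₃ : neg at ℓ₁, neg at ℓ₂, pos at ℓ₃, pos at ℓ
        by_contra hc'
        push_neg at hc'
        nlinarith [mul_pos hA (sub_pos.2 o1.2), mul_nonneg hb' (sub_pos.2 o2.1).le,
          mul_pos (neg_pos.2 hc') (sub_pos.2 o3.2)]
      · rcases le_or_gt 0 c with hc' | hc'
        · -- f₁ = h₁ - h₂ : neg at ℓ₁, pos at ℓ₂, neg at ℓ₃, pos at ℓ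
          exfalso
          nlinarith [mul_pos hA (sub_pos.2 o1.1), mul_pos (neg_pos.2 hb')
            (sub_pos.2 (o2.1.trans o2.2 : h₂ ℓ₂ < h₁ ℓ₂)),
            mul_nonneg hc' (sub_pos.2 o3.2).le]
        · exact absurd ⟨hb', hc'⟩ key
    have hlin : ℓ = a • ℓ₁ + b • ℓ₂ + c • ℓ₃ := by
      conv_lhs => rw [← B.affineCombination_coord_eq_self ℓ]
      rw [Finset.affineCombination_eq_linear_combination _ _ _ hsum', Fin.sum_univ_three]
      rfl
    have hsum3 : ∑ i, (![a, b, c]) i = 1 := by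
      rw [Fin.sum_univ_three]; simpa using hsum
    have heq : Finset.univ.centerMass ![a, b, c] ![ℓ₁, ℓ₂, ℓ₃] = ℓ := by
      rw [Finset.centerMass_eq_of_sum_1 _ _ hsum3, Fin.sum_univ_three, hlin]
      simp
    rw [← heq]
    exact Finset.centerMass_mem_convexHull _
      (fun i _ => by fin_cases i <;> simp [hA.le, hBnn.1, hBnn.2])
      (by rw [hsum3]; norm_num)
      (fun i _ => by fin_cases i <;> simp)
end

section
/- For every d ≥ 2 there exists a set of d+1 permutations on 3·2^d elements that does not admit a parallel simultaneous embedding in ℝ^d: i.e., there is no choice of 3·2^d affine functions h_i : ℝ^{d−1} → ℝ and d+1 points ℓ_j ∈ ℝ^{d−1} realizing all d+1 prescribed orders simultaneously. -/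
/-- The swap function underlying the gadget permutations: within gadget `s = i / 3`,
if bit `j` of `s` is set, swap the first two of the three elements. -/
def pseFun (j i : ℕ) : ℕ :=
  if i / 3 / 2 ^ j % 2 = 1 then
    (if i % 3 = 0 then i + 1 else if i % 3 = 1 then i - 1 else i)
  else i

lemma pseFun_invol (j i : ℕ) : pseFun j (pseFun j i) = i := by
  unfold pseFun
  by_cases hb : i / 3 / 2 ^ j % 2 = 1
  · rcases (by omega : i % 3 = 0 ∨ i % 3 = 1 ∨ i % 3 = 2) with h | h | h
    · have h1 : (i + 1) % 3 = 1 := by omega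
      have h2 : (i + 1) / 3 = i / 3 := by omega
      simp [hb, h, h1, h2]
    · have h1 : (i - 1) % 3 = 0 := by omega
      have h2 : (i - 1) / 3 = i / 3 := by omega
      simp [hb, h, h1, h2]
      omega
    · simp [hb, h]
  · simp [hb]

lemma pseFun_lt {d j i : ℕ} (hi : i < 3 * 2 ^ d) : pseFun j i < 3 * 2 ^ d := by
  unfold pseFun
  split_ifs <;> omega

lemma pseFun_a (j s : ℕ) :
    pseFun j (3 * s) = if s / 2 ^ j % 2 = 1 then 3 * s + 1 else 3 * s := by
  unfold pseFun
  have h1 : 3 * s / 3 = s := by omega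
  have h2 : 3 * s % 3 = 0 := by omega
  simp [h1, h2]

lemma pseFun_b (j s : ℕ) :
    pseFun j (3 * s + 1) = if s / 2 ^ j % 2 = 1 then 3 * s else 3 * s + 1 := by
  unfold pseFun
  have h1 : (3 * s + 1) / 3 = s := by omega
  have h2 : (3 * s + 1) % 3 = 1 := by omega
  simp [h1, h2]

/-- The gadget permutation for line `j`. -/
def pseSwap (d j : ℕ) : Equiv.Perm (Fin (3 * 2 ^ d)) :=
  Function.Involutive.toPerm (fun i => ⟨pseFun j i.1, pseFun_lt i.2⟩)
    (fun i => Fin.ext (pseFun_invol j i.1))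

lemma pseSwap_apply (d j : ℕ) (i : Fin (3 * 2 ^ d)) :
    (pseSwap d j i : ℕ) = pseFun j i.1 := rfl

/-- For every `d ≥ 2` there exist `d+1` permutations of a set of `3 * 2^d` vertices that
admit no parallel simultaneous embedding in `ℝ^d`. -/
theorem exists_no_parallel_embedding (d : ℕ) (hd : 2 ≤ d) :
    ∃ π : Fin (d + 1) → Equiv.Perm (Fin (3 * 2 ^ d)),
      ¬ ∃ (h : Fin (3 * 2 ^ d) → ((Fin (d - 1) → ℝ) →ᵃ[ℝ] ℝ))
          (ℓ : Fin (d + 1) → (Fin (d - 1) → ℝ)),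
        ∀ j : Fin (d + 1), StrictMono fun i : Fin (3 * 2 ^ d) => h (π j i) (ℓ j) := by
  classical
  refine ⟨fun j => pseSwap d j.1, ?_⟩
  rintro ⟨h, ℓ, hmono⟩
  -- the `d+1` lines are affinely dependent in `ℝ^(d-1)`
  have hdep : ¬ AffineIndependent ℝ ℓ := by
    intro ha
    have h1 := ha.card_le_finrank_succ
    have h2 : Module.finrank ℝ ↥(vectorSpan ℝ (Set.range ℓ)) ≤
        Module.finrank ℝ (Fin (d - 1) → ℝ) := Submodule.finrank_le _
    rw [Module.finrank_fin_fun] at h2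
    simp only [Fintype.card_fin] at h1
    omega
  obtain ⟨I, p, hp1, hp2⟩ := Convex.radon_partition hdep
  -- `A` is the Radon part not containing the last line `D`
  set D : Fin (d + 1) := ⟨d, by omega⟩ with hD
  obtain ⟨A, hDA, hpA, hpB⟩ :
      ∃ A : Set (Fin (d + 1)), D ∉ A ∧ p ∈ convexHull ℝ (ℓ '' A) ∧
        p ∈ convexHull ℝ (ℓ '' Aᶜ) := by
    by_cases hDI : D ∈ I
    · exact ⟨Iᶜ, by simp [hDI], hp2, by rwa [compl_compl]⟩
    · exact ⟨I, hDI, hp1, hp2⟩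
  -- encode membership in `A` of the first `d` lines as a gadget index `s`
  set c : Fin d → Fin 2 := fun j => if (⟨j.1, by omega⟩ : Fin (d + 1)) ∈ A then 1 else 0
    with hc
  set s : Fin (2 ^ d) := finFunctionFinEquiv c with hs
  have hbit : ∀ jj : Fin d, (s : ℕ) / 2 ^ (jj : ℕ) % 2 = (c jj : ℕ) := by
    intro jj
    have : finFunctionFinEquiv.symm s jj = c jj := by
      rw [hs, Equiv.symm_apply_apply]
    calc (s : ℕ) / 2 ^ (jj : ℕ) % 2 = ((finFunctionFinEquiv.symm s) jj : ℕ) := rfl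
      _ = (c jj : ℕ) := by rw [this]
  have hslt : (s : ℕ) < 2 ^ d := s.2
  -- the two relevant elements of gadget `s`
  set a : Fin (3 * 2 ^ d) := ⟨3 * (s : ℕ), by omega⟩ with ha
  set b : Fin (3 * 2 ^ d) := ⟨3 * (s : ℕ) + 1, by omega⟩ with hb
  have hab : a < b := by simp [Fin.lt_def, ha, hb]
  -- sign of `h b - h a` at each line, according to the bit of `s`
  have key : ∀ j : Fin (d + 1),
      ((s : ℕ) / 2 ^ (j : ℕ) % 2 = 1 → h b (ℓ j) < h a (ℓ j)) ∧
      ((s : ℕ) / 2 ^ (j : ℕ) % 2 ≠ 1 → h a (ℓ j) < h b (ℓ j)) := by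
    intro j
    have hm := hmono j hab
    have hA : (pseSwap d j.1 a : ℕ) = if (s : ℕ) / 2 ^ (j : ℕ) % 2 = 1
        then 3 * (s : ℕ) + 1 else 3 * (s : ℕ) := by
      rw [pseSwap_apply]; exact pseFun_a _ _
    have hB : (pseSwap d j.1 b : ℕ) = if (s : ℕ) / 2 ^ (j : ℕ) % 2 = 1
        then 3 * (s : ℕ) else 3 * (s : ℕ) + 1 := by
      rw [pseSwap_apply]; exact pseFun_b _ _
    constructor <;> intro hbitj
    · have e1 : pseSwap d j.1 a = b := Fin.ext (by rw [hA, if_pos hbitj])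
      have e2 : pseSwap d j.1 b = a := Fin.ext (by rw [hB, if_pos hbitj])
      simpa only [e1, e2] using hm
    · have e1 : pseSwap d j.1 a = a := Fin.ext (by rw [hA, if_neg hbitj])
      have e2 : pseSwap d j.1 b = b := Fin.ext (by rw [hB, if_neg hbitj])
      simpa only [e1, e2] using hm
  -- the affine function separating the two parts
  set F : (Fin (d - 1) → ℝ) →ᵃ[ℝ] ℝ := h b - h a with hF
  have hFapp : ∀ x, F x = h b x - h a x := fun x => by
    rw [hF, AffineMap.coe_sub]; rfl
  have hneg : ℓ '' A ⊆ F ⁻¹' Set.Iio 0 := by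
    rintro _ ⟨j, hjA, rfl⟩
    have hjd : (j : ℕ) < d := by
      rcases Nat.lt_or_ge (j : ℕ) d with h' | h'
      · exact h'
      · exfalso; apply hDA
        have : j = D := Fin.ext (by simp [hD]; omega)
        rwa [← this]
    have hcj : c ⟨(j : ℕ), hjd⟩ = 1 := by
      rw [hc]
      have : (⟨(j : ℕ), by omega⟩ : Fin (d + 1)) = j := Fin.ext rfl
      simp only [this, if_pos hjA]
    have hb1 : (s : ℕ) / 2 ^ (j : ℕ) % 2 = 1 := by
      have := hbit ⟨(j : ℕ), hjd⟩
      simp only [hcj] at this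
      exact this
    have := (key j).1 hb1
    simp only [Set.mem_preimage, Set.mem_Iio, hFapp]
    linarith
  have hpos : ℓ '' Aᶜ ⊆ F ⁻¹' Set.Ioi 0 := by
    rintro _ ⟨j, hjA, rfl⟩
    have hb0 : (s : ℕ) / 2 ^ (j : ℕ) % 2 ≠ 1 := by
      rcases Nat.lt_or_ge (j : ℕ) d with h' | h'
      · have hcj : c ⟨(j : ℕ), h'⟩ = 0 := by
          rw [hc]
          have he : (⟨(j : ℕ), by omega⟩ : Fin (d + 1)) = j := Fin.ext rfl
          simp only [he, if_neg hjA]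
        have := hbit ⟨(j : ℕ), h'⟩
        simp only [hcj] at this
        simp [this]
      · have hjd : (j : ℕ) = d := by omega
        have : (s : ℕ) / 2 ^ (j : ℕ) = 0 := by
          apply Nat.div_eq_of_lt
          rw [hjd]; exact hslt
        simp [this]
    have := (key j).2 hb0
    simp only [Set.mem_preimage, Set.mem_Ioi, hFapp]
    linarith
  have h1 : F p < 0 :=
    convexHull_min hneg ((convex_Iio (0 : ℝ)).affine_preimage F) hpA
  have h2 : 0 < F p :=
    convexHull_min hpos ((convex_Ioi (0 : ℝ)).affine_preimage F) hpB
  linarith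
end

section
/- For every d ≥ 2 there exists a set of d+1 permutations on 3·2^{2d} elements that does not admit a monotone simultaneous embedding in ℝ^d: there is no map p from the vertex set to ℝ^d together with vectors v₁,…,v_{d+1} ∈ ℝ^d making each path v_j-monotone. -/
/-- Every boolean pattern on `Fin k` is the bit pattern of some `t < 2^k`. -/
lemma exists_nat_of_bits : ∀ (k : ℕ) (s : Fin k → Bool),
    ∃ t : ℕ, t < 2 ^ k ∧ ∀ j : Fin k, t.testBit (j : ℕ) = s j := by
  intro k
  induction k with
  | zero => exact fun s => ⟨0, by norm_num, fun j => j.elim0⟩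
  | succ k ih =>
    intro s
    obtain ⟨t, ht, hbit⟩ := ih (fun j => s j.succ)
    refine ⟨(if s 0 then 1 else 0) + 2 * t, by split <;> (simp [pow_succ]; omega), ?_⟩
    intro j
    refine Fin.cases ?_ ?_ j
    · rcases hb : s 0 with _ | _ <;> simp [hb, Nat.testBit_zero] <;> omega
    · intro i
      have h2 : ((if s 0 then 1 else 0) + 2 * t) / 2 = t := by split <;> omega
      have := hbit i
      simpa [Nat.testBit_succ, h2] using this

/-- The pair-flipping function: within each pair `{2t, 2t+1}` swap the two elements
iff bit `j` of `t` is set. -/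
def flipFun (n j : ℕ) (hn : n % 2 = 0) (x : Fin n) : Fin n :=
  if Nat.testBit ((x : ℕ) / 2) j then
    ⟨2 * ((x : ℕ) / 2) + (1 - (x : ℕ) % 2), by have := x.isLt; omega⟩
  else x

lemma flipFun_involutive (n j : ℕ) (hn : n % 2 = 0) :
    Function.Involutive (flipFun n j hn) := by
  intro x
  unfold flipFun
  by_cases h : Nat.testBit ((x : ℕ) / 2) j
  · have hq : (2 * ((x : ℕ) / 2) + (1 - (x : ℕ) % 2)) / 2 = (x : ℕ) / 2 := by
      have := x.isLt; omega
    simp only [if_pos h, hq, if_pos h]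
    apply Fin.ext
    simp only []
    have := x.isLt; omega
  · simp only [if_neg h, if_neg h]

/-- The permutation used in the construction. -/
def badPerm (n j : ℕ) (hn : n % 2 = 0) : Equiv.Perm (Fin n) :=
  (flipFun_involutive n j hn).toPerm

lemma flipFun_val_true {n j : ℕ} {hn : n % 2 = 0} {x : Fin n}
    (h : Nat.testBit ((x : ℕ) / 2) j = true) :
    (flipFun n j hn x : ℕ) = 2 * ((x : ℕ) / 2) + (1 - (x : ℕ) % 2) := by
  unfold flipFun; rw [if_pos h]

lemma flipFun_val_false {n j : ℕ} {hn : n % 2 = 0} {x : Fin n}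
    (h : Nat.testBit ((x : ℕ) / 2) j = false) :
    flipFun n j hn x = x := by
  unfold flipFun; rw [if_neg]; simp [h]

/-- A function on `Fin n` increasing on consecutive elements is strictly monotone. -/
lemma strictmono_of_succ {n : ℕ} (f : Fin n → ℝ)
    (h : ∀ i (hi : i + 1 < n), f ⟨i, by omega⟩ < f ⟨i + 1, hi⟩) :
    ∀ x y : Fin n, (x : ℕ) < (y : ℕ) → f x < f y := by
  have main : ∀ (k : ℕ) (hk : k < n) (x : Fin n), (x : ℕ) < k → f x < f ⟨k, hk⟩ := by
    intro k
    induction k with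
    | zero => intro hk x hx; omega
    | succ k ih =>
      intro hk x hx
      rcases Nat.lt_or_ge (x : ℕ) k with h' | h'
      · exact (ih (by omega) x h').trans (h k hk)
      · have hx' : x = ⟨k, by omega⟩ := by
          apply Fin.ext
          show (x : ℕ) = k
          omega
        rw [hx']; exact h k hk
  intro x y hxy
  have := main (y : ℕ) y.isLt x hxy
  simpa using this

/-- For every `d ≥ 2` there exist `d+1` permutations of a set of `3 * 2^(2d)` vertices
that admit no monotone simultaneous embedding in `ℝ^d`. -/
theorem exists_no_monotone_embedding (d : ℕ) (hd : 2 ≤ d) :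
    ∃ π : Fin (d + 1) → Equiv.Perm (Fin (3 * 2 ^ (2 * d))),
      ¬ ∃ (p : Fin (3 * 2 ^ (2 * d)) → (Fin d → ℝ)) (v : Fin (d + 1) → (Fin d → ℝ)),
        ∀ (j : Fin (d + 1)) (i : Fin (3 * 2 ^ (2 * d))) (hi : (i : ℕ) + 1 < 3 * 2 ^ (2 * d)),
          0 < ∑ m, (p (π j ⟨(i : ℕ) + 1, hi⟩) m - p (π j i) m) * v j m := by
  set n := 3 * 2 ^ (2 * d) with hn_def
  have hdvd : (2 : ℕ) ∣ 2 ^ (2 * d) := dvd_pow_self 2 (by omega)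
  have hn : n % 2 = 0 := by omega
  refine ⟨fun j => badPerm n (j : ℕ) hn, ?_⟩
  rintro ⟨p, v, hpv⟩
  -- the linear functional values
  set g : Fin (d + 1) → Fin n → ℝ := fun j x => ∑ m, p x m * v j m with hg_def
  -- consecutive increase along each path
  have hcons : ∀ (j : Fin (d + 1)) (i : ℕ) (hi : i + 1 < n),
      g j (badPerm n (j : ℕ) hn ⟨i, by omega⟩) < g j (badPerm n (j : ℕ) hn ⟨i + 1, hi⟩) := by
    intro j i hi
    have := hpv j ⟨i, by omega⟩ hi
    rw [← sub_pos]
    calc (0 : ℝ) < ∑ m, (p (badPerm n (j : ℕ) hn ⟨i + 1, hi⟩) m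
            - p (badPerm n (j : ℕ) hn ⟨i, by omega⟩) m) * v j m := this
      _ = g j (badPerm n (j : ℕ) hn ⟨i + 1, hi⟩) - g j (badPerm n (j : ℕ) hn ⟨i, by omega⟩) := by
          simp [hg_def, sub_mul, Finset.sum_sub_distrib]
  -- strict monotonicity over positions
  have hmono : ∀ (j : Fin (d + 1)) (x y : Fin n),
      ((flipFun n (j : ℕ) hn x : ℕ)) < (flipFun n (j : ℕ) hn y : ℕ) → g j x < g j y := by
    intro j x y hxy
    have key := strictmono_of_succ (f := fun i => g j (badPerm n (j : ℕ) hn i))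
      (fun i hi => hcons j i hi) (flipFun n (j : ℕ) hn x) (flipFun n (j : ℕ) hn y) hxy
    have ex : ∀ z : Fin n, badPerm n (j : ℕ) hn (flipFun n (j : ℕ) hn z) = z :=
      fun z => flipFun_involutive n (j : ℕ) hn z
    simpa only [ex] using key
  -- linear dependence of the d+1 direction vectors
  have hnli : ¬ LinearIndependent ℝ v := by
    intro hli
    have h1 := hli.fintype_card_le_finrank
    rw [Module.finrank_fin_fun] at h1
    simp at h1
  obtain ⟨c, hc0, j₀, hj₀⟩ := Fintype.not_linearIndependent_iff.mp hnli
  -- the pair encoding the sign pattern of c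
  obtain ⟨t, ht, hbit⟩ := exists_nat_of_bits (d + 1) (fun j => decide (c j < 0))
  have hpow1 : 2 ^ (d + 2) = 2 * 2 ^ (d + 1) := by ring
  have hpow2 : 2 ^ (d + 2) ≤ 2 ^ (2 * d) := Nat.pow_le_pow_right (by norm_num) (by omega)
  have htn : 2 * t + 1 < n := by omega
  set a : Fin n := ⟨2 * t, by omega⟩ with ha_def
  set b : Fin n := ⟨2 * t + 1, by omega⟩ with hb_def
  have hadiv : ((a : ℕ)) / 2 = t := by
    have : (a : ℕ) = 2 * t := rfl
    omega
  have hbdiv : ((b : ℕ)) / 2 = t := by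
    have : (b : ℕ) = 2 * t + 1 := rfl
    omega
  -- each term c j * (g j b - g j a) is nonnegative, and positive at j₀
  have hterm : ∀ j : Fin (d + 1), 0 ≤ c j * (g j b - g j a) := by
    intro j
    by_cases hcj : c j < 0
    · have hbit' : Nat.testBit t (j : ℕ) = true := by simpa [hcj] using hbit j
      have hflipa : (flipFun n (j : ℕ) hn a : ℕ) = 2 * t + 1 := by
        rw [flipFun_val_true (by rw [hadiv]; exact hbit')]
        have hav : (a : ℕ) = 2 * t := rfl
        omega
      have hflipb : (flipFun n (j : ℕ) hn b : ℕ) = 2 * t := by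
        rw [flipFun_val_true (by rw [hbdiv]; exact hbit')]
        have hbv : (b : ℕ) = 2 * t + 1 := rfl
        omega
      have : g j b < g j a := hmono j b a (by omega)
      nlinarith
    · have hbit' : Nat.testBit t (j : ℕ) = false := by simpa [hcj] using hbit j
      have hflipa : (flipFun n (j : ℕ) hn a : ℕ) = 2 * t := by
        rw [flipFun_val_false (by rw [hadiv]; exact hbit')]
      have hflipb : (flipFun n (j : ℕ) hn b : ℕ) = 2 * t + 1 := by
        rw [flipFun_val_false (by rw [hbdiv]; exact hbit')]
      have : g j a < g j b := hmono j a b (by omega)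
      push_neg at hcj
      nlinarith
  have hterm₀ : 0 < c j₀ * (g j₀ b - g j₀ a) := by
    rcases lt_or_gt_of_ne hj₀ with hcj | hcj
    · have hbit' : Nat.testBit t (j₀ : ℕ) = true := by simpa [hcj] using hbit j₀
      have hflipa : (flipFun n (j₀ : ℕ) hn a : ℕ) = 2 * t + 1 := by
        rw [flipFun_val_true (by rw [hadiv]; exact hbit')]
        have hav : (a : ℕ) = 2 * t := rfl
        omega
      have hflipb : (flipFun n (j₀ : ℕ) hn b : ℕ) = 2 * t := by
        rw [flipFun_val_true (by rw [hbdiv]; exact hbit')]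
        have hbv : (b : ℕ) = 2 * t + 1 := rfl
        omega
      have : g j₀ b < g j₀ a := hmono j₀ b a (by omega)
      nlinarith
    · have hcj' : ¬ c j₀ < 0 := by linarith
      have hbit' : Nat.testBit t (j₀ : ℕ) = false := by simpa [hcj'] using hbit j₀
      have hflipa : (flipFun n (j₀ : ℕ) hn a : ℕ) = 2 * t := by
        rw [flipFun_val_false (by rw [hadiv]; exact hbit')]
      have hflipb : (flipFun n (j₀ : ℕ) hn b : ℕ) = 2 * t + 1 := by
        rw [flipFun_val_false (by rw [hbdiv]; exact hbit')]
      have : g j₀ a < g j₀ b := hmono j₀ a b (by omega)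
      nlinarith
  -- but the sum of the terms is zero by linear dependence
  have hzero : ∀ x : Fin n, ∑ j, c j * g j x = 0 := by
    intro x
    have hcm : ∀ m : Fin d, ∑ j, c j * v j m = 0 := by
      intro m
      have := congrFun hc0 m
      simpa [Finset.sum_apply] using this
    calc ∑ j, c j * g j x = ∑ j, ∑ m, c j * (p x m * v j m) := by
          simp [hg_def, Finset.mul_sum]
      _ = ∑ m, ∑ j, c j * (p x m * v j m) := Finset.sum_comm
      _ = ∑ m : Fin d, p x m * ∑ j, c j * v j m := by
          refine Finset.sum_congr rfl fun m _ => ?_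
          rw [Finset.mul_sum]
          refine Finset.sum_congr rfl fun j _ => by ring
      _ = 0 := by simp [hcm]
  have hsum : ∑ j, c j * (g j b - g j a) = 0 := by
    have := hzero b
    have := hzero a
    simp only [mul_sub]
    rw [Finset.sum_sub_distrib, hzero b, hzero a, sub_zero]
  have hpos : 0 < ∑ j, c j * (g j b - g j a) :=
    Finset.sum_pos' (fun j _ => hterm j) ⟨j₀, Finset.mem_univ _, hterm₀⟩
  rw [hsum] at hpos
  exact lt_irrefl 0 hpos
end

section
/- (Radon obstruction) Let ℓ₁,…,ℓ_d, ℓ ∈ ℝ^{d−1} be d+1 points (d ≥ 2). Suppose that additionally some hyperplane strictly separates ℓ from {ℓ₁,…,ℓ_d}. Then there exists a partition of {1,…,d} into Π₁ and Π₂ such that NO affine function g : ℝ^{d−1} → ℝ satisfies simultaneously g(ℓ_k) < 0 for all k ∈ Π₁, g(ℓ_k) > 0 for all k ∈ Π₂, and g(ℓ) > 0. -/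
/-- Radon obstruction: given `d+1` points `ℓ₁,…,ℓ_d, ℓ` in `ℝ^(d-1)` (`d ≥ 2`) such that
some hyperplane strictly separates `ℓ` from the `ℓ_k`, there is a partition of `{1,…,d}`
into `Pi₁` and its complement `Pi₂` such that no affine function `g` is negative on
`{ℓ_k : k ∈ Pi₁}`, positive on `{ℓ_k : k ∈ Pi₂}`, and positive at `ℓ`. -/
theorem radon_obstruction (d : ℕ) (hd : 2 ≤ d)
    (ℓs : Fin d → (Fin (d - 1) → ℝ)) (ℓ : Fin (d - 1) → ℝ)
    (hsep : ∃ s : (Fin (d - 1) → ℝ) →ᵃ[ℝ] ℝ, s ℓ < 0 ∧ ∀ k, 0 < s (ℓs k)) :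
    ∃ Pi₁ : Finset (Fin d),
      ¬ ∃ g : (Fin (d - 1) → ℝ) →ᵃ[ℝ] ℝ,
        (∀ k ∈ Pi₁, g (ℓs k) < 0) ∧ (∀ k ∉ Pi₁, 0 < g (ℓs k)) ∧ 0 < g ℓ := by
  classical
  set p : Option (Fin d) → (Fin (d - 1) → ℝ) := fun i => i.elim ℓ ℓs with hp
  -- the d+1 points are affinely dependent
  have hdep : ¬ AffineIndependent ℝ p := by
    intro h
    have hc := h.card_le_finrank_succ
    have h1 : Module.finrank ℝ (vectorSpan ℝ (Set.range p)) ≤ d - 1 := by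
      have := (Submodule.finrank_le (vectorSpan ℝ (Set.range p))).trans
        (le_of_eq (Module.finrank_fin_fun ℝ))
      exact this
    have h2 : Fintype.card (Option (Fin d)) = d + 1 := by simp
    omega
  rw [affineIndependent_iff_of_fintype] at hdep
  push_neg at hdep
  obtain ⟨w, hw0, hwv, i₀, hi₀⟩ := hdep
  -- normalize so that the weight of ℓ is nonnegative
  set ε : ℝ := if 0 ≤ w none then 1 else -1 with hε
  set v : Option (Fin d) → ℝ := fun i => ε * w i with hv
  have hεne : ε ≠ 0 := by
    rcases le_or_gt 0 (w none) with h | h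
    · simp [hε, h]
    · simp [hε, h.not_ge]
  have hv0 : ∑ i, v i = 0 := by
    simp only [hv, ← Finset.mul_sum, hw0, mul_zero]
  have hvnone : 0 ≤ v none := by
    rcases le_or_gt 0 (w none) with h | h
    · simp [hv, hε, h]
    · simp only [hv, hε, if_neg h.not_ge]
      nlinarith
  have hvi₀ : v i₀ ≠ 0 := mul_ne_zero hεne hi₀
  have hvsum : ∑ i, v i • p i = 0 := by
    have h1 : Finset.univ.weightedVSub p w = (0 : Fin (d-1) → ℝ) := hwv
    rw [Finset.weightedVSub_eq_linear_combination _ hw0] at h1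
    have : ∑ i, v i • p i = ε • ∑ i, w i • p i := by
      rw [Finset.smul_sum]; congr 1; ext i; rw [smul_smul]
    rw [this, h1, smul_zero]
  refine ⟨Finset.univ.filter (fun k => v (some k) < 0), ?_⟩
  rintro ⟨g, hneg, hpos, hℓ⟩
  -- apply g to the affine dependence
  have key : ∑ i, v i * g (p i) = 0 := by
    have hdecomp : ∀ x, g x = g.linear x + g 0 := by
      intro x
      have := g.map_vadd 0 x
      simpa [vadd_eq_add] using this
    calc ∑ i, v i * g (p i) = ∑ i, (v i * g.linear (p i) + v i * g 0) :=
          Finset.sum_congr rfl fun i _ => by rw [hdecomp (p i)]; ring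
      _ = g.linear (∑ i, v i • p i) + (∑ i, v i) * g 0 := by
          rw [Finset.sum_add_distrib, map_sum, ← Finset.sum_mul]
          congr 1
          exact Finset.sum_congr rfl fun i _ => by rw [map_smul]; rfl
      _ = 0 := by rw [hvsum, hv0, map_zero, zero_mul, add_zero]
  -- every term is nonnegative, and the i₀ term is positive
  have hterm : ∀ i, 0 ≤ v i * g (p i) := by
    intro i
    match i with
    | none => exact mul_nonneg hvnone (le_of_lt hℓ)
    | some k =>
      rcases lt_trichotomy (v (some k)) 0 with h | h | h
      · have := hneg k (by simp [h])
        exact le_of_lt (mul_pos_of_neg_of_neg h this)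
      · simp [h]
      · have := hpos k (by simp [not_lt.2 (le_of_lt h)])
        exact le_of_lt (mul_pos h this)
  have hstrict : 0 < v i₀ * g (p i₀) := by
    match i₀, hvi₀ with
    | none, hvi₀ =>
      exact mul_pos (lt_of_le_of_ne hvnone (Ne.symm hvi₀)) hℓ
    | some k, hvi₀ =>
      rcases lt_or_gt_of_ne hvi₀ with h | h
      · exact mul_pos_of_neg_of_neg h (hneg k (by simp [h]))
      · exact mul_pos h (hpos k (by simp [not_lt.2 (le_of_lt h)]))
  have : 0 < ∑ i, v i * g (p i) :=
    Finset.sum_pos' (fun i _ => hterm i) ⟨i₀, Finset.mem_univ _, hstrict⟩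
  linarith [key, this]
end
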